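/- arXiv:2101.01216 — 2 statements merged into one kernel-verified Lean document; each statement's English description precedes it below -/
import Mathlib

section
/- Define Δ(φ) = m r² − J sin²(φ) with constants m r² > J > 0. Then the pair of functions f_θ(φ) = 1/√(2 Δ(φ)) and f_ψ(φ) = −sin(φ)/√(2 Δ(φ)) solves the linear ODE system f_θ' = (J sin φ cos φ / Δ) f_θ and f_ψ' = −(m r² cos φ / Δ) f_θ on the interval (−π/2, π/2). -/
open Real

lemma HasDerivAt.one_div_sqrt {f : ℝ → ℝ} {f' x : ℝ} (hf : HasDerivAt f f' x) (hx : 0 < f x) :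
    HasDerivAt (fun y => 1 / √(f y)) (-(f' / (2 * f x)) * (1 / √(f x))) x := by
  have hsqrt : 0 < √(f x) := sqrt_pos.2 hx
  refine ((hasDerivAt_const x (1 : ℝ)).div (hf.sqrt hx.ne') hsqrt.ne').congr_deriv ?_
  field_simp
  rw [sq_sqrt hx.le]
  ring

lemma hasDerivAt_sub_mul_sin_sq (a J x : ℝ) :
    HasDerivAt (fun φ => a - J * sin φ ^ 2) (-(2 * J * sin x * cos x)) x := by
  refine ((((hasDerivAt_sin x).pow 2).const_mul J).const_sub a).congr_deriv ?_
  ring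

lemma sub_mul_sin_sq_pos {a J : ℝ} (hJ : 0 ≤ J) (hJa : J < a) (x : ℝ) : 0 < a - J * sin x ^ 2 := by
  nlinarith [sin_sq_le_one x]

theorem stmt6_general (m r J : ℝ) (hJ : 0 < J)
    (hmrJ : J < m * r ^ 2) :
    ∀ φ ∈ Set.Ioo (-(Real.pi / 2)) (Real.pi / 2),
      HasDerivAt (fun φ => 1 / Real.sqrt (2 * (m * r ^ 2 - J * Real.sin φ ^ 2)))
        (J * Real.sin φ * Real.cos φ / (m * r ^ 2 - J * Real.sin φ ^ 2) *
          (1 / Real.sqrt (2 * (m * r ^ 2 - J * Real.sin φ ^ 2)))) φ ∧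
      HasDerivAt (fun φ => -Real.sin φ / Real.sqrt (2 * (m * r ^ 2 - J * Real.sin φ ^ 2)))
        (-(m * r ^ 2 * Real.cos φ / (m * r ^ 2 - J * Real.sin φ ^ 2)) *
          (1 / Real.sqrt (2 * (m * r ^ 2 - J * Real.sin φ ^ 2)))) φ := by
  intro φ _
  have hΔ := sub_mul_sin_sq_pos hJ.le hmrJ φ
  have hθ := ((hasDerivAt_sub_mul_sin_sq (m * r ^ 2) J φ).const_mul 2).one_div_sqrt (by positivity)
  refine ⟨hθ.congr_deriv (by field_simp), ?_⟩
  -- `f_ψ = -sin φ * f_θ`, and the product rule produces `Δ + J sin² φ = m r²` in the numerator.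
  simp only [div_eq_mul_one_div (-sin _)]
  refine ((hasDerivAt_sin φ).neg.mul hθ).congr_deriv ?_
  simp only [Pi.neg_apply]
  field_simp
  ring

/-- With `Δ(φ) = m r² - J sin² φ` and `m r² > J > 0`, the functions
`f_θ = 1/√(2Δ)` and `f_ψ = -sin φ/√(2Δ)` solve the snakeboard momentum
equations `f_θ' = (J sin φ cos φ/Δ) f_θ` and `f_ψ' = -(m r² cos φ/Δ) f_θ`
on `(-π/2, π/2)`. -/
theorem stmt6 (m r J : ℝ) (hm : 0 < m) (hr : 0 < r) (hJ : 0 < J)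
    (hmrJ : J < m * r ^ 2) :
    ∀ φ ∈ Set.Ioo (-(Real.pi / 2)) (Real.pi / 2),
      HasDerivAt (fun φ => 1 / Real.sqrt (2 * (m * r ^ 2 - J * Real.sin φ ^ 2)))
        (J * Real.sin φ * Real.cos φ / (m * r ^ 2 - J * Real.sin φ ^ 2) *
          (1 / Real.sqrt (2 * (m * r ^ 2 - J * Real.sin φ ^ 2)))) φ ∧
      HasDerivAt (fun φ => -Real.sin φ / Real.sqrt (2 * (m * r ^ 2 - J * Real.sin φ ^ 2)))
        (-(m * r ^ 2 * Real.cos φ / (m * r ^ 2 - J * Real.sin φ ^ 2)) *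
          (1 / Real.sqrt (2 * (m * r ^ 2 - J * Real.sin φ ^ 2)))) φ :=
  stmt6_general m r J hJ hmrJ
end

section
/- Let π be a bivector field on ℝ⁴ with coordinates (φ, p_φ, p_θ, p_ψ) given by π = ∂_φ ∧ ∂_{p_φ} + g(φ, p_θ, p_ψ) ∂_{p_φ} ∧ ∂_{p_θ}, where g is any smooth function not depending on p_φ. Then π satisfies the Jacobi identity ([π, π] = 0), i.e. π is a Poisson bivector. -/
noncomputable section Snake

private def DD (i : Fin 4) (a : (Fin 4 → ℝ) → ℝ) (x : Fin 4 → ℝ) : ℝ :=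
  fderiv ℝ a x (Pi.single i 1)

private lemma contDiff_DD {a : (Fin 4 → ℝ) → ℝ} (ha : ContDiff ℝ (⊤ : ℕ∞) a) (i : Fin 4) :
    ContDiff ℝ (⊤ : ℕ∞) (DD i a) :=
  (ha.fderiv_right (by simp)).clm_apply contDiff_const

private lemma DD_symm {a : (Fin 4 → ℝ) → ℝ} (ha : ContDiff ℝ (⊤ : ℕ∞) a) (i j : Fin 4)
    (x : Fin 4 → ℝ) : DD i (DD j a) x = DD j (DD i a) x := by
  have hd : Differentiable ℝ (fderiv ℝ a) :=
    (ha.fderiv_right (m := 1) (by exact WithTop.coe_le_coe.mpr le_top)).differentiable (by simp)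
  have key : ∀ v w : Fin 4 → ℝ,
      fderiv ℝ (fun y => fderiv ℝ a y v) x w = fderiv ℝ (fderiv ℝ a) x w v := by
    intro v w
    rw [fderiv_clm_apply (hd x) (differentiableAt_const v)]
    simp
  show fderiv ℝ (fun y => fderiv ℝ a y (Pi.single j 1)) x (Pi.single i 1)
      = fderiv ℝ (fun y => fderiv ℝ a y (Pi.single i 1)) x (Pi.single j 1)
  rw [key, key]
  exact second_derivative_symmetric
    (fun y => (ha.differentiable (by simp) y).hasFDerivAt) (hd x).hasFDerivAt _ _

end Snake

noncomputable section Snake2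

private def GG (g : ℝ → ℝ → ℝ → ℝ) (x : Fin 4 → ℝ) : ℝ := g (x 0) (x 2) (x 3)

private def LL : (Fin 4 → ℝ) →L[ℝ] ℝ × ℝ × ℝ :=
  (ContinuousLinearMap.proj 0).prod
    ((ContinuousLinearMap.proj 2).prod (ContinuousLinearMap.proj 3))

private lemma GG_eq (g : ℝ → ℝ → ℝ → ℝ) :
    GG g = (fun q : ℝ × ℝ × ℝ => g q.1 q.2.1 q.2.2) ∘ LL := rfl

private lemma contDiff_GG {g : ℝ → ℝ → ℝ → ℝ}
    (hg : ContDiff ℝ (⊤ : ℕ∞) fun q : ℝ × ℝ × ℝ => g q.1 q.2.1 q.2.2) :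
    ContDiff ℝ (⊤ : ℕ∞) (GG g) := by
  rw [GG_eq]; exact hg.comp LL.contDiff

private lemma DD_one_GG {g : ℝ → ℝ → ℝ → ℝ}
    (hg : ContDiff ℝ (⊤ : ℕ∞) fun q : ℝ × ℝ × ℝ => g q.1 q.2.1 q.2.2) (x : Fin 4 → ℝ) :
    DD 1 (GG g) x = 0 := by
  show fderiv ℝ (GG g) x (Pi.single 1 1) = 0
  rw [GG_eq, fderiv_comp x ((hg.differentiable (by simp)).differentiableAt)
    LL.differentiableAt, LL.fderiv]
  have hL : LL (Pi.single (1 : Fin 4) (1 : ℝ)) = 0 := by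
    simp [LL, Pi.single_eq_of_ne]
  simp [hL]

private lemma DD_mul {u v : (Fin 4 → ℝ) → ℝ} {x : Fin 4 → ℝ}
    (hu : DifferentiableAt ℝ u x) (hv : DifferentiableAt ℝ v x) (i : Fin 4) :
    DD i (fun y => u y * v y) x = DD i u x * v x + u x * DD i v x := by
  show fderiv ℝ (fun y => u y * v y) x (Pi.single i 1) = _
  rw [fderiv_fun_mul hu hv]
  show u x * DD i v x + v x * DD i u x = DD i u x * v x + u x * DD i v x
  ring

private lemma DD_add {u v : (Fin 4 → ℝ) → ℝ} {x : Fin 4 → ℝ}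
    (hu : DifferentiableAt ℝ u x) (hv : DifferentiableAt ℝ v x) (i : Fin 4) :
    DD i (fun y => u y + v y) x = DD i u x + DD i v x := by
  show fderiv ℝ (fun y => u y + v y) x (Pi.single i 1) = _
  rw [fderiv_fun_add hu hv]; rfl

private lemma DD_sub {u v : (Fin 4 → ℝ) → ℝ} {x : Fin 4 → ℝ}
    (hu : DifferentiableAt ℝ u x) (hv : DifferentiableAt ℝ v x) (i : Fin 4) :
    DD i (fun y => u y - v y) x = DD i u x - DD i v x := by
  show fderiv ℝ (fun y => u y - v y) x (Pi.single i 1) = _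
  rw [fderiv_fun_sub hu hv]; rfl

end Snake2

noncomputable section Snake3

private def braF (g : ℝ → ℝ → ℝ → ℝ) (a b : (Fin 4 → ℝ) → ℝ) (x : Fin 4 → ℝ) : ℝ :=
  (DD 0 a x * DD 1 b x - DD 1 a x * DD 0 b x)
    + GG g x * (DD 1 a x * DD 2 b x - DD 2 a x * DD 1 b x)

private lemma DD_braF {g : ℝ → ℝ → ℝ → ℝ}
    (hg : ContDiff ℝ (⊤ : ℕ∞) fun q : ℝ × ℝ × ℝ => g q.1 q.2.1 q.2.2)
    {a b : (Fin 4 → ℝ) → ℝ} (ha : ContDiff ℝ (⊤ : ℕ∞) a) (hb : ContDiff ℝ (⊤ : ℕ∞) b)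
    (i : Fin 4) (x : Fin 4 → ℝ) :
    DD i (braF g a b) x =
      (DD i (DD 0 a) x * DD 1 b x + DD 0 a x * DD i (DD 1 b) x
        - (DD i (DD 1 a) x * DD 0 b x + DD 1 a x * DD i (DD 0 b) x))
      + (DD i (GG g) x * (DD 1 a x * DD 2 b x - DD 2 a x * DD 1 b x)
        + GG g x * ((DD i (DD 1 a) x * DD 2 b x + DD 1 a x * DD i (DD 2 b) x)
          - (DD i (DD 2 a) x * DD 1 b x + DD 2 a x * DD i (DD 1 b) x))) := by
  have dG : ∀ y, DifferentiableAt ℝ (GG g) y :=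
    fun y => ((contDiff_GG hg).differentiable (by simp)) y
  have dA : ∀ j y, DifferentiableAt ℝ (DD j a) y :=
    fun j y => ((contDiff_DD ha j).differentiable (by simp)) y
  have dB : ∀ j y, DifferentiableAt ℝ (DD j b) y :=
    fun j y => ((contDiff_DD hb j).differentiable (by simp)) y
  have e : braF g a b = fun y =>
      (DD 0 a y * DD 1 b y - DD 1 a y * DD 0 b y)
        + GG g y * (DD 1 a y * DD 2 b y - DD 2 a y * DD 1 b y) := rfl
  rw [e, DD_add (((dA 0 x).fun_mul (dB 1 x)).fun_sub ((dA 1 x).fun_mul (dB 0 x)))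
        ((dG x).fun_mul (((dA 1 x).fun_mul (dB 2 x)).fun_sub ((dA 2 x).fun_mul (dB 1 x)))),
      DD_sub ((dA 0 x).fun_mul (dB 1 x)) ((dA 1 x).fun_mul (dB 0 x)),
      DD_mul (dA 0 x) (dB 1 x), DD_mul (dA 1 x) (dB 0 x),
      DD_mul (dG x) (((dA 1 x).fun_mul (dB 2 x)).fun_sub ((dA 2 x).fun_mul (dB 1 x))),
      DD_sub ((dA 1 x).fun_mul (dB 2 x)) ((dA 2 x).fun_mul (dB 1 x)),
      DD_mul (dA 1 x) (dB 2 x), DD_mul (dA 2 x) (dB 1 x)]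

end Snake3

/-- The bivector `π = ∂_φ ∧ ∂_{p_φ} + g(φ, p_θ, p_ψ) ∂_{p_φ} ∧ ∂_{p_θ}` on ℝ⁴
(with coordinates `(φ, p_φ, p_θ, p_ψ)`, `g` independent of `p_φ`) satisfies the
Jacobi identity, i.e. is Poisson. -/
theorem stmt11 (g : ℝ → ℝ → ℝ → ℝ)
    (hg : ContDiff ℝ (⊤ : ℕ∞) fun q : ℝ × ℝ × ℝ => g q.1 q.2.1 q.2.2) :
    ∀ f h k : (Fin 4 → ℝ) → ℝ,
      ContDiff ℝ (⊤ : ℕ∞) f → ContDiff ℝ (⊤ : ℕ∞) h → ContDiff ℝ (⊤ : ℕ∞) k →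
      let P : (Fin 4 → ℝ) → Fin 4 → Fin 4 → ℝ := fun x i j =>
        if i = 0 ∧ j = 1 then 1
        else if i = 1 ∧ j = 0 then -1
        else if i = 1 ∧ j = 2 then g (x 0) (x 2) (x 3)
        else if i = 2 ∧ j = 1 then -g (x 0) (x 2) (x 3)
        else 0
      let bra : ((Fin 4 → ℝ) → ℝ) → ((Fin 4 → ℝ) → ℝ) → ((Fin 4 → ℝ) → ℝ) :=
        fun a b x => ∑ i : Fin 4, ∑ j : Fin 4,
          P x i j * fderiv ℝ a x (Pi.single i 1) * fderiv ℝ b x (Pi.single j 1)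
      ∀ x, bra f (bra h k) x + bra h (bra k f) x + bra k (bra f h) x = 0 := by
  intro f h k hf hh hk P bra x
  have hbra : ∀ a b : (Fin 4 → ℝ) → ℝ, bra a b = braF g a b := by
    intro a b
    funext y
    show (∑ i : Fin 4, ∑ j : Fin 4,
      P y i j * fderiv ℝ a y (Pi.single i 1) * fderiv ℝ b y (Pi.single j 1)) = _
    have hP : ∀ i j : Fin 4, P y i j =
        if i = 0 ∧ j = 1 then 1
        else if i = 1 ∧ j = 0 then -1
        else if i = 1 ∧ j = 2 then g (y 0) (y 2) (y 3)
        else if i = 2 ∧ j = 1 then -g (y 0) (y 2) (y 3)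
        else 0 := fun i j => rfl
    simp (config := { decide := true }) [hP, Fin.sum_univ_four, braF, DD, GG]
    ring
  simp only [hbra]
  simp only [braF, DD_braF hg hh hk, DD_braF hg hk hf, DD_braF hg hf hh]
  have s1 := DD_symm hf 1 0 x
  have s2 := DD_symm hf 2 0 x
  have s3 := DD_symm hf 2 1 x
  have s4 := DD_symm hh 1 0 x
  have s5 := DD_symm hh 2 0 x
  have s6 := DD_symm hh 2 1 x
  have s7 := DD_symm hk 1 0 x
  have s8 := DD_symm hk 2 0 x
  have s9 := DD_symm hk 2 1 x
  have hG1 := DD_one_GG hg x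
  rw [s1, s2, s3, s4, s5, s6, s7, s8, s9, hG1]
  ring
end
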